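/- Let L be an n×n real symmetric matrix whose eigenvalues all lie in the interval [−4, 0] (i.e., L is negative semidefinite and L + 4I is positive semidefinite), let γ > 0, and let Z be an n×T real matrix. Then the supremum of dᵀ Z x over all d ∈ ℝⁿ, x ∈ ℝᵀ, and k ∈ ℝ subject to the constraints ‖d‖₂² + γ‖L d + k² d‖₂² ≤ 1 and ‖x‖₂² ≤ 1 equals the maximum over k̄ ∈ [0, 4] of the spectral norm ‖(I + γ(k̄ I + L)²)^{−1/2} Z‖₂. -/

import Mathlib

open Matrix Filter
open scoped Classical

/-- Euclidean norm of a vector. -/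
noncomputable def euclNorm {n : Type*} [Fintype n] (v : n → ℝ) : ℝ :=
  Real.sqrt (∑ i, v i ^ 2)

/-- Spectral norm (largest singular value) of a matrix: the supremum of
`‖M x‖₂` over the Euclidean unit ball. -/
noncomputable def specNorm {m n : Type*} [Fintype m] [Fintype n] (M : Matrix m n ℝ) : ℝ :=
  sSup {y | ∃ x : n → ℝ, euclNorm x ≤ 1 ∧ y = euclNorm (M.mulVec x)}

/-- The old `Matrix.PosSemidef.sqrt` (removed from Mathlib), with its old definition. -/
noncomputable def posSemidefSqrt {n : Type*} [Fintype n] [DecidableEq n]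
    {A : Matrix n n ℝ} (hA : A.PosSemidef) : Matrix n n ℝ :=
  (hA.1.eigenvectorUnitary : Matrix n n ℝ) *
    diagonal ((↑) ∘ (Real.sqrt ·) ∘ hA.1.eigenvalues) *
    (star hA.1.eigenvectorUnitary : Matrix n n ℝ)

/-- `A^{-1/2}`: the inverse of the positive semidefinite square root of `A`
(junk value `0` if `A` is not positive semidefinite). -/
noncomputable def invSqrt {n : Type*} [Fintype n] [DecidableEq n]
    (A : Matrix n n ℝ) : Matrix n n ℝ :=
  if h : A.PosSemidef then (posSemidefSqrt h)⁻¹ else 0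

/-- Squared Frobenius norm helper via entries, and Frobenius norm. -/
noncomputable def frobNorm {m n : Type*} [Fintype m] [Fintype n] (M : Matrix m n ℝ) : ℝ :=
  Real.sqrt (∑ i, ∑ j, M i j ^ 2)

/-- Frobenius (trace) inner product. -/
noncomputable def frobInner {m n : Type*} [Fintype m] [Fintype n]
    (A B : Matrix m n ℝ) : ℝ :=
  ∑ i, ∑ j, A i j * B i j

/-!
For fixed `k` the constraint on `d` reads `dᵀ A(k²) d ≤ 1`, and the maximum of `d ⬝ᵥ v` over
this ellipsoid is `‖A(k²)^{-1/2} v‖₂`: Cauchy–Schwarz applied to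
`d ⬝ᵥ v = (A^{1/2} d) ⬝ᵥ (A^{-1/2} v)`, with equality at `d ∝ A⁻¹ v`. Maximising over `x` turns
this into a spectral norm, so the left side is the supremum of `‖A(c)^{-1/2} Z‖₂` over
`c = k² ≥ 0`. For `c ≥ 4` we have `A(c) - A(4) = γ (c - 4) (2 (L + 4I) + (c - 4) I) ⪰ 0`, and
inversion reverses the Loewner order, so these values are dominated by the one at `c = 4`.
-/

section Euclidean

variable {m n : Type*} [Fintype m] [Fintype n]

lemma euclNorm_nonneg (v : n → ℝ) : 0 ≤ euclNorm v := Real.sqrt_nonneg _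

lemma euclNorm_sq (v : n → ℝ) : euclNorm v ^ 2 = v ⬝ᵥ v := by
  rw [euclNorm, Real.sq_sqrt (by positivity)]
  simp only [dotProduct, sq]

lemma euclNorm_le_one_iff {v : n → ℝ} : euclNorm v ≤ 1 ↔ ∑ i, v i ^ 2 ≤ 1 :=
  Real.sqrt_le_one

lemma dotProduct_le_euclNorm_mul_euclNorm (u w : n → ℝ) :
    u ⬝ᵥ w ≤ euclNorm u * euclNorm w :=
  Real.sum_mul_le_sqrt_mul_sqrt _ u w

lemma euclNorm_mulVec_le (M : Matrix m n ℝ) (x : n → ℝ) :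
    euclNorm (M *ᵥ x) ≤ frobNorm M * euclNorm x := by
  rw [euclNorm, frobNorm, euclNorm, ← Real.sqrt_mul (by positivity), Finset.sum_mul]
  gcongr with i
  exact Finset.sum_mul_sq_le_sq_mul_sq _ _ _

lemma euclNorm_mulVec_le_specNorm (M : Matrix m n ℝ) {x : n → ℝ} (hx : euclNorm x ≤ 1) :
    euclNorm (M *ᵥ x) ≤ specNorm M := by
  refine le_csSup ⟨frobNorm M, ?_⟩ ⟨x, hx, rfl⟩
  rintro _ ⟨y, hy, rfl⟩
  calc euclNorm (M *ᵥ y) ≤ frobNorm M * euclNorm y := euclNorm_mulVec_le M y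
    _ ≤ frobNorm M := mul_le_of_le_one_right (Real.sqrt_nonneg _) hy

lemma specNorm_le {M : Matrix m n ℝ} {K : ℝ}
    (h : ∀ x, euclNorm x ≤ 1 → euclNorm (M *ᵥ x) ≤ K) : specNorm M ≤ K :=
  csSup_le ⟨_, 0, by simp [euclNorm], rfl⟩ (by rintro _ ⟨x, hx, rfl⟩; exact h x hx)

end Euclidean

lemma Matrix.IsSymm.dotProduct_mulVec_comm {n R : Type*} [Fintype n] [CommSemiring R]
    {S : Matrix n n R} (hS : S.IsSymm) (u w : n → R) : u ⬝ᵥ S *ᵥ w = S *ᵥ u ⬝ᵥ w := by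
  rw [dotProduct_mulVec, ← vecMul_transpose, hS.eq]

lemma Matrix.IsSymm.smul_one_add {n R : Type*} [DecidableEq n] [CommSemiring R]
    {L : Matrix n n R} (hL : L.IsSymm) (c : R) : (c • 1 + L).IsSymm :=
  (isSymm_one.smul c).add hL

section InvSqrt

variable {n : Type*} [Fintype n] [DecidableEq n] {A : Matrix n n ℝ}

lemma posSemidefSqrt_isSymm (hA : A.PosSemidef) : (posSemidefSqrt hA).IsSymm := by
  rw [← isHermitian_iff_isSymm, posSemidefSqrt, star_eq_conjTranspose]
  exact isHermitian_mul_mul_conjTranspose _ (isHermitian_diagonal _)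

lemma posSemidefSqrt_mul_self (hA : A.PosSemidef) :
    posSemidefSqrt hA * posSemidefSqrt hA = A := by
  have hU : star (hA.1.eigenvectorUnitary : Matrix n n ℝ) * hA.1.eigenvectorUnitary = 1 :=
    Unitary.star_mul_self_of_mem hA.1.eigenvectorUnitary.2
  conv_rhs => rw [hA.1.spectral_theorem, Unitary.conjStarAlgAut_apply]
  simp only [posSemidefSqrt, Matrix.mul_assoc]
  rw [← Matrix.mul_assoc (star _), hU, Matrix.one_mul, ← Matrix.mul_assoc (diagonal _),
    diagonal_mul_diagonal]
  congr 3
  funext i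
  simp [Real.mul_self_sqrt (hA.eigenvalues_nonneg i)]

lemma Matrix.PosDef.mulVec_inv_mulVec (hA : A.PosDef) (v : n → ℝ) :
    A *ᵥ (A⁻¹ *ᵥ v) = v := by
  rw [mulVec_mulVec, mul_nonsing_inv _ hA.det_pos.ne'.isUnit, one_mulVec]

lemma invSqrt_of_posSemidef (hA : A.PosSemidef) : invSqrt A = (posSemidefSqrt hA)⁻¹ :=
  dif_pos hA

lemma posSemidefSqrt_mul_invSqrt (hA : A.PosDef) :
    posSemidefSqrt hA.posSemidef * invSqrt A = 1 := by
  have hdet : (posSemidefSqrt hA.posSemidef).det ≠ 0 := by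
    have h := hA.det_pos
    rw [← posSemidefSqrt_mul_self hA.posSemidef, det_mul] at h
    exact left_ne_zero_of_mul h.ne'
  rw [invSqrt_of_posSemidef hA.posSemidef, mul_nonsing_inv _ hdet.isUnit]

lemma invSqrt_mul_self (hA : A.PosSemidef) : invSqrt A * invSqrt A = A⁻¹ := by
  rw [invSqrt_of_posSemidef hA, ← Matrix.mul_inv_rev, posSemidefSqrt_mul_self]

lemma euclNorm_invSqrt_mulVec_sq (hA : A.PosSemidef) (v : n → ℝ) :
    euclNorm (invSqrt A *ᵥ v) ^ 2 = v ⬝ᵥ A⁻¹ *ᵥ v := by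
  have hsymm : (invSqrt A).IsSymm := by
    rw [invSqrt_of_posSemidef hA]
    exact (posSemidefSqrt_isSymm hA).inv
  rw [euclNorm_sq, ← hsymm.dotProduct_mulVec_comm, mulVec_mulVec, invSqrt_mul_self hA]

lemma isGreatest_dotProduct_of_quadForm_le_one (hA : A.PosDef) (v : n → ℝ) :
    IsGreatest ((· ⬝ᵥ v) '' {d | d ⬝ᵥ A *ᵥ d ≤ 1}) (euclNorm (invSqrt A *ᵥ v)) := by
  set e := euclNorm (invSqrt A *ᵥ v)
  constructor
  · have hv : A⁻¹ *ᵥ v ⬝ᵥ v = e ^ 2 := by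
      rw [dotProduct_comm, euclNorm_invSqrt_mulVec_sq hA.posSemidef]
    have he : e⁻¹ * e ^ 2 = e := by rw [sq, ← mul_assoc, inv_mul_mul_self]
    refine ⟨e⁻¹ • A⁻¹ *ᵥ v, ?_, ?_⟩
    · simp only [Set.mem_ofPred_eq, mulVec_smul, hA.mulVec_inv_mulVec, smul_dotProduct,
        dotProduct_smul, hv, smul_eq_mul, he]
      exact inv_mul_le_one
    · simp only [smul_dotProduct, hv, smul_eq_mul, he]
  · rintro _ ⟨d, hd, rfl⟩
    set S := posSemidefSqrt hA.posSemidef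
    have hSd : euclNorm (S *ᵥ d) ≤ 1 := by
      rw [← sq_le_one_iff₀ (euclNorm_nonneg _), euclNorm_sq,
        ← (posSemidefSqrt_isSymm _).dotProduct_mulVec_comm, mulVec_mulVec,
        posSemidefSqrt_mul_self]
      exact hd
    calc d ⬝ᵥ v = S *ᵥ d ⬝ᵥ invSqrt A *ᵥ v := by
          rw [← (posSemidefSqrt_isSymm _).dotProduct_mulVec_comm, mulVec_mulVec,
            posSemidefSqrt_mul_invSqrt hA, one_mulVec]
      _ ≤ euclNorm (S *ᵥ d) * e := dotProduct_le_euclNorm_mul_euclNorm _ _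
      _ ≤ e := mul_le_of_le_one_left (euclNorm_nonneg _) hSd

end InvSqrt

section Loewner

variable {n : Type*} [Fintype n] [DecidableEq n] {A B : Matrix n n ℝ}

lemma dotProduct_inv_mulVec_le_of_posSemidef_sub (hA : A.PosDef) (hAB : (B - A).PosSemidef)
    (v : n → ℝ) : v ⬝ᵥ B⁻¹ *ᵥ v ≤ v ⬝ᵥ A⁻¹ *ᵥ v := by
  have hB : B.PosDef := by simpa using hA.add_posSemidef hAB
  set y := B⁻¹ *ᵥ v
  set z := A⁻¹ *ᵥ v
  have hBy : B *ᵥ y = v := hB.mulVec_inv_mulVec v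
  have hAz : A *ᵥ z = v := hA.mulVec_inv_mulVec v
  have hAsymm : A.IsSymm := isHermitian_iff_isSymm.mp hA.isHermitian
  -- expand `0 ≤ (y - z)ᵀ A (y - z)` and bound `yᵀ A y ≤ yᵀ B y`
  have h₁ := hA.posSemidef.dotProduct_mulVec_nonneg (y - z)
  have h₂ := hAB.dotProduct_mulVec_nonneg y
  simp only [star_trivial, sub_mulVec, mulVec_sub, dotProduct_sub, sub_dotProduct] at h₁ h₂
  rw [hAsymm.dotProduct_mulVec_comm z y, hAz] at h₁
  rw [hBy] at h₂
  linarith [dotProduct_comm v y, dotProduct_comm v z]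

lemma euclNorm_invSqrt_mulVec_le_of_posSemidef_sub (hA : A.PosDef) (hAB : (B - A).PosSemidef)
    (v : n → ℝ) : euclNorm (invSqrt B *ᵥ v) ≤ euclNorm (invSqrt A *ᵥ v) := by
  have hB : B.PosDef := by simpa using hA.add_posSemidef hAB
  rw [← pow_le_pow_iff_left₀ (euclNorm_nonneg _) (euclNorm_nonneg _) two_ne_zero,
    euclNorm_invSqrt_mulVec_sq hA.posSemidef, euclNorm_invSqrt_mulVec_sq hB.posSemidef]
  exact dotProduct_inv_mulVec_le_of_posSemidef_sub hA hAB v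

lemma euclNorm_invSqrt_mulVec_le_euclNorm (hB : (B - 1).PosSemidef) (v : n → ℝ) :
    euclNorm (invSqrt B *ᵥ v) ≤ euclNorm v := by
  have hB' : B.PosDef := by simpa using PosDef.one.add_posSemidef hB
  rw [← pow_le_pow_iff_left₀ (euclNorm_nonneg _) (euclNorm_nonneg _) two_ne_zero,
    euclNorm_invSqrt_mulVec_sq hB'.posSemidef, euclNorm_sq]
  simpa using dotProduct_inv_mulVec_le_of_posSemidef_sub PosDef.one hB v

lemma specNorm_invSqrt_mul_le_frobNorm {m : Type*} [Fintype m] (hB : (B - 1).PosSemidef)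
    (Z : Matrix n m ℝ) : specNorm (invSqrt B * Z) ≤ frobNorm Z := by
  refine specNorm_le fun x hx => ?_
  calc euclNorm ((invSqrt B * Z) *ᵥ x) ≤ euclNorm (Z *ᵥ x) := by
        rw [← mulVec_mulVec]
        exact euclNorm_invSqrt_mulVec_le_euclNorm hB _
    _ ≤ frobNorm Z * euclNorm x := euclNorm_mulVec_le Z x
    _ ≤ frobNorm Z := mul_le_of_le_one_right (Real.sqrt_nonneg _) hx

end Loewner

section PenaltyMatrix

variable {n : Type*} [Fintype n] [DecidableEq n] {L : Matrix n n ℝ} {γ : ℝ}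

def penaltyMatrix (L : Matrix n n ℝ) (γ c : ℝ) : Matrix n n ℝ :=
  1 + γ • (c • 1 + L) ^ 2

lemma dotProduct_penaltyMatrix_mulVec (hL : L.IsSymm) (c : ℝ) (d : n → ℝ) :
    d ⬝ᵥ penaltyMatrix L γ c *ᵥ d = ∑ i, d i ^ 2 + γ * ∑ i, ((L *ᵥ d) i + c * d i) ^ 2 := by
  have hBd : (c • 1 + L) *ᵥ d = L *ᵥ d + c • d := by
    rw [add_mulVec, smul_mulVec, one_mulVec, add_comm]
  rw [penaltyMatrix, add_mulVec, smul_mulVec, sq, ← mulVec_mulVec, one_mulVec, dotProduct_add,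
    dotProduct_smul, (hL.smul_one_add c).dotProduct_mulVec_comm, hBd]
  simp only [dotProduct, sq, smul_eq_mul, Pi.add_apply, Pi.smul_apply]

lemma penaltyMatrix_sub_one_posSemidef (hL : L.IsSymm) (hγ : 0 ≤ γ) (c : ℝ) :
    (penaltyMatrix L γ c - 1).PosSemidef := by
  have hB : (c • 1 + L).IsHermitian := isHermitian_iff_isSymm.mpr (hL.smul_one_add c)
  rw [penaltyMatrix, add_sub_cancel_left, sq]
  nth_rewrite 1 [← hB.eq]
  exact (posSemidef_conjTranspose_mul_self _).smul hγ

lemma penaltyMatrix_posDef (hL : L.IsSymm) (hγ : 0 ≤ γ) (c : ℝ) :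
    (penaltyMatrix L γ c).PosDef := by
  simpa using PosDef.one.add_posSemidef (penaltyMatrix_sub_one_posSemidef hL hγ c)

lemma penaltyMatrix_sub_posSemidef (hγ : 0 ≤ γ) {a c : ℝ} (hac : a ≤ c)
    (hLa : (L + a • 1).PosSemidef) :
    (penaltyMatrix L γ c - penaltyMatrix L γ a).PosSemidef := by
  have h : penaltyMatrix L γ c - penaltyMatrix L γ a
      = (γ * (c - a)) • ((2 : ℝ) • (L + a • 1) + (c - a) • 1) := by
    simp only [penaltyMatrix, sq, add_mul, mul_add, Matrix.mul_smul, Matrix.smul_mul,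
      Matrix.one_mul, Matrix.mul_one]
    module
  rw [h]
  exact ((hLa.smul zero_le_two).add (PosSemidef.one.smul (sub_nonneg.mpr hac))).smul
    (mul_nonneg hγ (sub_nonneg.mpr hac))

lemma euclNorm_invSqrt_penaltyMatrix_mulVec_le_min (hL : L.IsSymm) (hγ : 0 ≤ γ) {a : ℝ}
    (hLa : (L + a • 1).PosSemidef) (c : ℝ) (v : n → ℝ) :
    euclNorm (invSqrt (penaltyMatrix L γ c) *ᵥ v)
      ≤ euclNorm (invSqrt (penaltyMatrix L γ (min c a)) *ᵥ v) := by
  rcases le_total c a with h | h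
  · rw [min_eq_left h]
  · rw [min_eq_right h]
    exact euclNorm_invSqrt_mulVec_le_of_posSemidef_sub (penaltyMatrix_posDef hL hγ a)
      (penaltyMatrix_sub_posSemidef hγ h hLa) v

end PenaltyMatrix

theorem stmt0_general {n T : ℕ} (L : Matrix (Fin n) (Fin n) ℝ) (hSymm : L.IsSymm)
    (hShift : (L + (4 : ℝ) • (1 : Matrix (Fin n) (Fin n) ℝ)).PosSemidef)
    (γ : ℝ) (hγ : 0 < γ) (Z : Matrix (Fin n) (Fin T) ℝ) :
    sSup {y | ∃ (d : Fin n → ℝ) (x : Fin T → ℝ) (k : ℝ),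
        (∑ i, d i ^ 2) + γ * (∑ i, (L.mulVec d i + k ^ 2 * d i) ^ 2) ≤ 1 ∧
        (∑ j, x j ^ 2) ≤ 1 ∧ y = d ⬝ᵥ Z.mulVec x} =
    sSup {y | ∃ k ∈ Set.Icc (0 : ℝ) 4,
        y = specNorm (invSqrt ((1 : Matrix (Fin n) (Fin n) ℝ)
              + γ • (k • (1 : Matrix (Fin n) (Fin n) ℝ) + L) ^ 2) * Z)} := by
  change _ = sSup {y | ∃ k ∈ Set.Icc (0 : ℝ) 4,
    y = specNorm (invSqrt (penaltyMatrix L γ k) * Z)}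
  have hA := penaltyMatrix_posDef hSymm hγ.le
  refine IsLUB.csSup_eq ⟨?_, fun b hb => csSup_le ⟨_, 0, ⟨le_rfl, zero_le_four⟩, rfl⟩ ?_⟩
    ⟨0, 0, 0, 0, by simp, by simp, by simp⟩
  · rintro _ ⟨d, x, k, hd, hx, rfl⟩
    have hc : min (k ^ 2) 4 ∈ Set.Icc (0 : ℝ) 4 :=
      ⟨le_min (sq_nonneg k) zero_le_four, min_le_right _ _⟩
    refine le_trans ?_ (le_csSup ⟨frobNorm Z, ?_⟩ ⟨_, hc, rfl⟩)
    · calc d ⬝ᵥ Z *ᵥ x ≤ euclNorm (invSqrt (penaltyMatrix L γ (k ^ 2)) *ᵥ Z *ᵥ x) :=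
            (isGreatest_dotProduct_of_quadForm_le_one (hA _) _).2
              ⟨d, (dotProduct_penaltyMatrix_mulVec hSymm _ d).trans_le hd, rfl⟩
        _ ≤ euclNorm (invSqrt (penaltyMatrix L γ (min (k ^ 2) 4)) *ᵥ Z *ᵥ x) :=
            euclNorm_invSqrt_penaltyMatrix_mulVec_le_min hSymm hγ.le hShift _ _
        _ ≤ specNorm (invSqrt (penaltyMatrix L γ (min (k ^ 2) 4)) * Z) := by
            rw [mulVec_mulVec]
            exact euclNorm_mulVec_le_specNorm _ (euclNorm_le_one_iff.mpr hx)
    · rintro _ ⟨c, -, rfl⟩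
      exact specNorm_invSqrt_mul_le_frobNorm (penaltyMatrix_sub_one_posSemidef hSymm hγ.le c) Z
  · rintro _ ⟨c, hc, rfl⟩
    refine specNorm_le fun x hx => ?_
    obtain ⟨d, hd, hdx⟩ := (isGreatest_dotProduct_of_quadForm_le_one (hA c) (Z *ᵥ x)).1
    rw [← mulVec_mulVec, ← hdx]
    refine hb ⟨d, x, √c, ?_, euclNorm_le_one_iff.mp hx, rfl⟩
    rwa [Real.sq_sqrt hc.1, ← dotProduct_penaltyMatrix_mulVec hSymm]

/-- The polar problem equals a line search over `k̄ ∈ [0,4]` of the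
spectral norm of `A(k̄)^{-1/2} Z`, where `A(k̄) = I + γ(k̄ I + L)²`. -/
theorem stmt0 {n T : ℕ} (L : Matrix (Fin n) (Fin n) ℝ) (hSymm : L.IsSymm)
    (hNeg : (-L).PosSemidef)
    (hShift : (L + (4 : ℝ) • (1 : Matrix (Fin n) (Fin n) ℝ)).PosSemidef)
    (γ : ℝ) (hγ : 0 < γ) (Z : Matrix (Fin n) (Fin T) ℝ) :
    sSup {y | ∃ (d : Fin n → ℝ) (x : Fin T → ℝ) (k : ℝ),
        (∑ i, d i ^ 2) + γ * (∑ i, (L.mulVec d i + k ^ 2 * d i) ^ 2) ≤ 1 ∧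
        (∑ j, x j ^ 2) ≤ 1 ∧ y = d ⬝ᵥ Z.mulVec x} =
    sSup {y | ∃ k ∈ Set.Icc (0 : ℝ) 4,
        y = specNorm (invSqrt ((1 : Matrix (Fin n) (Fin n) ℝ)
              + γ • (k • (1 : Matrix (Fin n) (Fin n) ℝ) + L) ^ 2) * Z)} :=
  stmt0_general L hSymm hShift γ hγ Z
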